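/- arXiv:2306.16129 — 6 statements merged into one kernel-verified Lean document; each statement's English description precedes it below -/
import Mathlib

section
/- Let Σ be a finite alphabet and let Π be a family of subsets of Σ^n that is monotone non-increasing (if A ∈ Π and B ⊆ A then B ∈ Π) and contains at least one nonempty set. Let D(Π) be the set of probability mass functions on Σ^n whose support belongs to Π. Then for every PMF P on Σ^n there exist A ∈ Π and a function f : Σ^n → Σ^n mapping supp(P) into A, such that the pushforward f(P) belongs to D(Π) and d_EMD(P, D(Π)) = d_EMD(P, f(P)) = Σ_{x∈supp(P)} P(x)·d(x, f(x)), where d is the normalized Hamming distance. -/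
open scoped BigOperators

/-- Normalized Hamming distance between strings of length `n`: `|{i : x i ≠ y i}| / n`. -/
noncomputable def nhdist {n : ℕ} {α : Type*} [DecidableEq α] (x y : Fin n → α) : ℝ :=
  (hammingDist x y : ℝ) / n

/-- `T` is a coupling (transfer distribution) of `P` and `Q`:
its first marginal is `P` and its second marginal is `Q`. -/
def IsCoupling {α : Type*} (T : PMF (α × α)) (P Q : PMF α) : Prop :=
  T.map Prod.fst = P ∧ T.map Prod.snd = Q

/-- Expected cost `E_{(x,y)∼T}[d x y]` of a coupling on a finite type. -/
noncomputable def expCost {α : Type*} [Fintype α] (d : α → α → ℝ) (T : PMF (α × α)) : ℝ :=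
  ∑ z : α × α, (T z).toReal * d z.1 z.2

/-- Earth mover's distance between PMFs on a finite type, w.r.t. the cost function `d`:
the infimum over all couplings of the expected cost. -/
noncomputable def emd {α : Type*} [Fintype α] (d : α → α → ℝ) (P Q : PMF α) : ℝ :=
  sInf {r | ∃ T : PMF (α × α), IsCoupling T P Q ∧ r = expCost d T}

/- ------------------- auxiliary lemmas ------------------- -/

lemma nhdist_nonneg {n : ℕ} {α : Type*} [DecidableEq α] (x y : Fin n → α) :
    0 ≤ nhdist x y :=
  div_nonneg (Nat.cast_nonneg _) (Nat.cast_nonneg _)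

/-- Expectation under a pushforward PMF. -/
lemma pmf_map_sum_mul {α β : Type*} [Fintype α] [Fintype β] [DecidableEq β]
    (Q : PMF α) (g : α → β) (h : β → ℝ) :
    ∑ b : β, ((Q.map g) b).toReal * h b = ∑ a : α, (Q a).toReal * h (g a) := by
  classical
  have key : ∀ b, ((Q.map g) b).toReal = ∑ a : α, if b = g a then (Q a).toReal else 0 := by
    intro b
    rw [PMF.map_apply, tsum_fintype, ENNReal.toReal_sum]
    · exact Finset.sum_congr rfl fun a _ => by split <;> simp
    · intro a _
      split
      · exact Q.apply_ne_top a
      · simp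
  calc ∑ b : β, ((Q.map g) b).toReal * h b
      = ∑ b : β, ∑ a : α, (if b = g a then (Q a).toReal else 0) * h b := by
        simp_rw [key, Finset.sum_mul]
    _ = ∑ a : α, ∑ b : β, (if b = g a then (Q a).toReal * h b else 0) := by
        rw [Finset.sum_comm]
        refine Finset.sum_congr rfl fun a _ => Finset.sum_congr rfl fun b _ => ?_
        split <;> simp
    _ = ∑ a : α, (Q a).toReal * h (g a) := by
        refine Finset.sum_congr rfl fun a _ => ?_
        simp

lemma marg_fst_apply {α : Type*} [Fintype α] [DecidableEq α]
    {T : PMF (α × α)} {P : PMF α} (h : T.map Prod.fst = P) (x : α) :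
    ∑ y : α, T (x, y) = P x := by
  rw [← h, PMF.map_apply, tsum_fintype, Fintype.sum_prod_type, Finset.sum_comm]
  refine (Finset.sum_congr rfl fun y _ => ?_).symm
  exact (Finset.sum_eq_single_of_mem x (Finset.mem_univ x)
    (fun b _ hb => if_neg fun h' => hb h'.symm)).trans (if_pos rfl)

lemma marg_snd_apply {α : Type*} [Fintype α] [DecidableEq α]
    {T : PMF (α × α)} {Q : PMF α} (h : T.map Prod.snd = Q) (y : α) :
    ∑ x : α, T (x, y) = Q y := by
  rw [← h, PMF.map_apply, tsum_fintype, Fintype.sum_prod_type]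
  refine (Finset.sum_congr rfl fun x _ => ?_).symm
  exact (Finset.sum_eq_single_of_mem y (Finset.mem_univ y)
    (fun b _ hb => if_neg fun h' => hb h'.symm)).trans (if_pos rfl)

/-- The deterministic coupling of `P` and `P.map f`. -/
lemma isCoupling_det {α : Type*} (P : PMF α) (f : α → α) :
    IsCoupling (P.map fun x => (x, f x)) P (P.map f) := by
  constructor
  · rw [PMF.map_comp]
    have : (Prod.fst ∘ fun x : α => (x, f x)) = id := rfl
    rw [this, PMF.map_id]
  · rw [PMF.map_comp]
    have : (Prod.snd ∘ fun x : α => (x, f x)) = f := rfl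
    rw [this]

/-- The independent coupling of `P` and `Q`. -/
lemma isCoupling_indep {α : Type*} (P Q : PMF α) :
    IsCoupling (P.bind fun x => Q.map fun y => (x, y)) P Q := by
  constructor
  · rw [PMF.map_bind]
    have : ∀ x : α, PMF.map Prod.fst (Q.map fun y => (x, y)) = PMF.pure x := by
      intro x
      rw [PMF.map_comp]
      have h2 : (Prod.fst ∘ fun y : α => (x, y)) = Function.const α x := rfl
      rw [h2, PMF.map_const]
    simp_rw [this]
    exact PMF.bind_pure P
  · rw [PMF.map_bind]
    have : ∀ x : α, PMF.map Prod.snd (Q.map fun y => (x, y)) = Q := by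
      intro x
      rw [PMF.map_comp]
      have h2 : (Prod.snd ∘ fun y : α => (x, y)) = id := rfl
      rw [h2, PMF.map_id]
    simp_rw [this]
    exact PMF.bind_const P Q

/-- From any coupling of `P` and `Q` one extracts a map `g` sending the support of `P`
into the support of `Q`, whose deterministic cost is at most the coupling's cost. -/
lemma coupling_cost_lower {n : ℕ} {σ : Type*} [Fintype σ] [DecidableEq σ]
    (P Q : PMF (Fin n → σ)) (T : PMF ((Fin n → σ) × (Fin n → σ))) (hT : IsCoupling T P Q) :
    ∃ g : (Fin n → σ) → (Fin n → σ), (∀ x ∈ P.support, g x ∈ Q.support) ∧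
      ∑ x : Fin n → σ, (P x).toReal * nhdist x (g x) ≤ expCost nhdist T := by
  classical
  let s : (Fin n → σ) → Finset (Fin n → σ) :=
    fun x => Finset.univ.filter (fun y => T (x, y) ≠ 0)
  have hgdef : ∀ x, (s x).Nonempty → ∃ y ∈ s x, ∀ y' ∈ s x, nhdist x y ≤ nhdist x y' :=
    fun x h => Finset.exists_min_image (s x) (nhdist x) h
  choose! g hg1 hg2 using hgdef
  have hmargf : ∀ x, ∑ y : Fin n → σ, T (x, y) = P x := marg_fst_apply hT.1
  have hmargs : ∀ y, ∑ x : Fin n → σ, T (x, y) = Q y := marg_snd_apply hT.2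
  have hne_s : ∀ x ∈ P.support, (s x).Nonempty := by
    intro x hx
    have hPx : P x ≠ 0 := hx
    rw [← hmargf x] at hPx
    obtain ⟨y, _, hy⟩ := Finset.exists_ne_zero_of_sum_ne_zero hPx
    exact ⟨y, Finset.mem_filter.2 ⟨Finset.mem_univ y, hy⟩⟩
  refine ⟨g, ?_, ?_⟩
  · intro x hx
    have hmem := hg1 x (hne_s x hx)
    have hTne : T (x, g x) ≠ 0 := (Finset.mem_filter.1 hmem).2
    have : Q (g x) ≠ 0 := by
      rw [← hmargs (g x)]
      intro hzero
      exact hTne ((Finset.sum_eq_zero_iff.1 hzero) x (Finset.mem_univ x))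
    exact this
  · have step1 : ∑ z : (Fin n → σ) × (Fin n → σ), (T z).toReal * nhdist z.1 (g z.1)
        ≤ expCost nhdist T := by
      refine Finset.sum_le_sum fun z _ => ?_
      by_cases hz : T z = 0
      · simp [hz]
      · have hz2 : z.2 ∈ s z.1 := Finset.mem_filter.2 ⟨Finset.mem_univ _, hz⟩
        have hmin := hg2 z.1 ⟨z.2, hz2⟩ z.2 hz2
        exact mul_le_mul_of_nonneg_left hmin ENNReal.toReal_nonneg
    refine le_trans (le_of_eq ?_) step1
    rw [Fintype.sum_prod_type]
    refine Finset.sum_congr rfl fun x _ => ?_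
    have : ∑ y : Fin n → σ, (T (x, y)).toReal * nhdist x (g x)
        = (∑ y : Fin n → σ, (T (x, y)).toReal) * nhdist x (g x) := by
      rw [Finset.sum_mul]
    rw [this, ← ENNReal.toReal_sum (fun y _ => T.apply_ne_top _), hmargf x]

/-- For a monotone non-increasing family `Fam` of subsets of `Σ^n` containing a nonempty set,
the EMD distance of any PMF `P` from the property `D(Fam)` (PMFs whose support lies in `Fam`)
is realized by a pushforward `f(P)` of `P` along a map `f` sending `supp P` into some `A ∈ Fam`,
and this distance equals `Σ_x P(x)·d(x, f x)`. -/
theorem canonical_dist_from_support_property (n : ℕ) (σ : Type*) [Fintype σ] [DecidableEq σ]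
    (Fam : Set (Set (Fin n → σ)))
    (hmono : ∀ A ∈ Fam, ∀ B ⊆ A, B ∈ Fam)
    (hne : ∃ A ∈ Fam, A.Nonempty)
    (P : PMF (Fin n → σ)) :
    ∃ A ∈ Fam, ∃ f : (Fin n → σ) → (Fin n → σ),
      (∀ x ∈ P.support, f x ∈ A) ∧
      (P.map f) ∈ {Q : PMF (Fin n → σ) | Q.support ∈ Fam} ∧
      emd nhdist P (P.map f)
        = sInf ((fun Q => emd nhdist P Q) '' {Q : PMF (Fin n → σ) | Q.support ∈ Fam}) ∧
      emd nhdist P (P.map f) = ∑ x : Fin n → σ, (P x).toReal * nhdist x (f x) := by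
  classical
  obtain ⟨A₀, hA₀, a₀, ha₀⟩ := hne
  let S : Finset ((Fin n → σ) → (Fin n → σ)) :=
    Finset.univ.filter (fun f => f '' P.support ∈ Fam)
  have hSne : S.Nonempty := by
    refine ⟨fun _ => a₀, ?_⟩
    simp only [S, Finset.mem_filter, Finset.mem_univ, true_and]
    apply hmono A₀ hA₀
    rintro y ⟨x, _, rfl⟩
    exact ha₀
  obtain ⟨f, hfS, hfmin⟩ :=
    Finset.exists_min_image S (fun f => ∑ x : Fin n → σ, (P x).toReal * nhdist x (f x)) hSne
  have hfFam : f '' P.support ∈ Fam := (Finset.mem_filter.1 hfS).2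
  set c := ∑ x : Fin n → σ, (P x).toReal * nhdist x (f x) with hc
  have key : ∀ Q : PMF (Fin n → σ), Q.support ∈ Fam →
      ∀ T, IsCoupling T P Q → c ≤ expCost nhdist T := by
    intro Q hQ T hT
    obtain ⟨g, hg1, hg2⟩ := coupling_cost_lower P Q T hT
    refine le_trans ?_ hg2
    apply hfmin
    simp only [S, Finset.mem_filter, Finset.mem_univ, true_and]
    apply hmono Q.support hQ
    rintro y ⟨x, hx, rfl⟩
    exact hg1 x hx
  have emd_ge : ∀ Q : PMF (Fin n → σ), Q.support ∈ Fam → c ≤ emd nhdist P Q := by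
    intro Q hQ
    apply le_csInf
    · exact ⟨expCost nhdist (P.bind fun x => Q.map fun y => (x, y)),
        ⟨_, isCoupling_indep P Q, rfl⟩⟩
    · rintro r ⟨T, hT, rfl⟩
      exact key Q hQ T hT
  have hsuppmap : (P.map f).support ∈ Fam := by
    rw [PMF.support_map]
    exact hfFam
  have hdetcost : expCost nhdist (P.map fun x => (x, f x)) = c := by
    rw [expCost]
    exact pmf_map_sum_mul P (fun x => (x, f x)) (fun z => nhdist z.1 z.2)
  have hemd_eq : emd nhdist P (P.map f) = c := by
    apply le_antisymm
    · apply csInf_le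
      · exact ⟨c, by rintro r ⟨T, hT, rfl⟩; exact key _ hsuppmap T hT⟩
      · exact ⟨P.map fun x => (x, f x), isCoupling_det P f, hdetcost.symm⟩
    · exact emd_ge _ hsuppmap
  have himg : sInf ((fun Q => emd nhdist P Q) '' {Q : PMF (Fin n → σ) | Q.support ∈ Fam}) = c := by
    apply le_antisymm
    · refine csInf_le ⟨c, ?_⟩ ⟨P.map f, hsuppmap, hemd_eq⟩
      rintro r ⟨Q, hQ, rfl⟩
      exact emd_ge Q hQ
    · refine le_csInf ⟨emd nhdist P (P.map f), ⟨P.map f, hsuppmap, rfl⟩⟩ ?_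
      rintro r ⟨Q, hQ, rfl⟩
      exact emd_ge Q hQ
  exact ⟨f '' P.support, hfFam, f, fun x hx => ⟨x, hx, rfl⟩, hsuppmap,
    by rw [hemd_eq, himg], by rw [hemd_eq]⟩
end

section
/- Let ε > 0 and let P be a probability mass function on {0,1}^n such that d_EMD(P, Q) ≥ ε for every PMF Q on {0,1}^n whose support has at most m elements. Then for every nonempty set A ⊆ {0,1}^n with |A| ≤ m, Pr_{x∼P}[min_{y∈A} d(x,y) > ε/2] ≥ ε/2, where d is the normalized Hamming distance. -/
open scoped BigOperators

lemma nhdist_le_one {n : ℕ} {α : Type*} [DecidableEq α] (x y : Fin n → α) : nhdist x y ≤ 1 := by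
  rcases Nat.eq_zero_or_pos n with h | h
  · simp [nhdist, h]
  · rw [nhdist, div_le_one (by exact_mod_cast h)]
    exact_mod_cast hammingDist_le_card_fintype.trans (by simp)

namespace PMF

variable {α β : Type*}

lemma sum_toReal_eq_one [Fintype α] (P : PMF α) : ∑ a, (P a).toReal = 1 := by
  rw [← ENNReal.toReal_sum fun a _ => P.apply_ne_top a, ← tsum_fintype (L := .unconditional _),
    P.tsum_coe, ENNReal.toReal_one]

lemma ncard_support_map_le_card (P : PMF α) {f : α → β} (A : Finset β) (hf : ∀ a, f a ∈ A) :
    (P.map f).support.ncard ≤ A.card := by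
  have hsub : (P.map f).support ⊆ ↑A := by
    rw [support_map]
    rintro _ ⟨a, -, rfl⟩
    exact hf a
  simpa using Set.ncard_le_ncard hsub A.finite_toSet

lemma sum_map_toReal_mul [Fintype α] [Fintype β] (P : PMF α) (f : α → β) (c : β → ℝ) :
    ∑ b, (P.map f b).toReal * c b = ∑ a, (P a).toReal * c (f a) := by
  classical
  have hmap : ∀ b, (P.map f b).toReal = ∑ a, if b = f a then (P a).toReal else 0 := by
    intro b
    rw [map_apply, tsum_fintype, ENNReal.toReal_sum fun a _ => by split <;> simp [P.apply_ne_top]]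
    exact Finset.sum_congr rfl fun a _ => by split <;> simp
  simp_rw [hmap, Finset.sum_mul, ite_mul, zero_mul]
  rw [Finset.sum_comm]
  exact Finset.sum_congr rfl fun a _ => by simp

lemma sum_toReal_mul_le_sum_ite_add [Fintype α] (P : PMF α) {g : α → ℝ} (hg : ∀ a, g a ≤ 1)
    {t : ℝ} (ht : 0 ≤ t) :
    ∑ a, (P a).toReal * g a ≤ ∑ a, (if t < g a then (P a).toReal else 0) + t := by
  have hpt : ∀ a,
      (P a).toReal * g a ≤ (if t < g a then (P a).toReal else 0) + t * (P a).toReal := by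
    intro a
    have hP : 0 ≤ (P a).toReal := ENNReal.toReal_nonneg
    split_ifs with h
    · nlinarith [hg a]
    · nlinarith
  calc ∑ a, (P a).toReal * g a
      ≤ ∑ a, ((if t < g a then (P a).toReal else 0) + t * (P a).toReal) :=
        Finset.sum_le_sum fun a _ => hpt a
    _ = _ := by rw [Finset.sum_add_distrib, ← Finset.mul_sum, P.sum_toReal_eq_one, mul_one]

lemma isCoupling_map_graph (P : PMF α) (f : α → α) :
    IsCoupling (P.map fun a => (a, f a)) P (P.map f) := by
  constructor
  · rw [map_comp]
    exact map_id P
  · rw [map_comp]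
    rfl

end PMF

lemma emd_le_expCost {α : Type*} [Fintype α] {d : α → α → ℝ} (hd : ∀ x y, 0 ≤ d x y)
    {P Q : PMF α} {T : PMF (α × α)} (hT : IsCoupling T P Q) : emd d P Q ≤ expCost d T := by
  refine csInf_le ⟨0, ?_⟩ ⟨T, hT, rfl⟩
  rintro r ⟨T', -, rfl⟩
  exact Finset.sum_nonneg fun z _ => mul_nonneg ENNReal.toReal_nonneg (hd _ _)

lemma emd_map_le {α : Type*} [Fintype α] {d : α → α → ℝ} (hd : ∀ x y, 0 ≤ d x y)
    (P : PMF α) (f : α → α) : emd d P (P.map f) ≤ ∑ a, (P a).toReal * d a (f a) :=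
  (emd_le_expCost hd (P.isCoupling_map_graph f)).trans_eq
    (P.sum_map_toReal_mul (fun a => (a, f a)) fun z => d z.1 z.2)

open scoped Classical in
/-- If `P` is `ε`-far (in EMD) from every PMF supported on at most `m` elements, then for
every nonempty set `A` of at most `m` strings, a `P`-sample is `(ε/2)`-far from all of `A`
with probability at least `ε/2`. -/
theorem far_from_small_support (n m : ℕ) (ε : ℝ) (hε : 0 < ε) (P : PMF (Fin n → Bool))
    (hfar : ∀ Q : PMF (Fin n → Bool), Q.support.ncard ≤ m → ε ≤ emd nhdist P Q)
    (A : Finset (Fin n → Bool)) (hA : A.Nonempty) (hAm : A.card ≤ m) :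
    ε / 2 ≤ ∑ x : Fin n → Bool,
      (if ε / 2 < A.inf' hA (fun y => nhdist x y) then (P x).toReal else 0) := by
  choose f hfA hfd using fun x => A.exists_mem_eq_inf' hA (fun y => nhdist x y)
  have hsupp : (P.map f).support.ncard ≤ m := (P.ncard_support_map_le_card A hfA).trans hAm
  have hcost : ε ≤ ∑ x, (P x).toReal * A.inf' hA (fun y => nhdist x y) := by
    simpa only [hfd] using (hfar _ hsupp).trans (emd_map_le nhdist_nonneg P f)
  have hmarkov := P.sum_toReal_mul_le_sum_ite_add (g := fun x => A.inf' hA (fun y => nhdist x y))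
    (fun x => hfd x ▸ nhdist_le_one _ _) (half_pos hε).le
  linarith
end

section
/- Fix an integer n > 60. Let inv be the set of pairs of functions (f', g') with f', g' : [n] → [n] such that either f'(i) = g'(i) for every i, or g'(f'(i)) = i for every i. For a pair (f,g) of functions [n] → [n], define its distance from inv as min_{(f',g')∈inv} (d(f,f') + d(g,g'))/2, where d is the normalized Hamming distance between functions (fraction of points where they differ). If f and g are drawn independently and uniformly at random from the set of permutations of [n], then the probability that the distance of (f,g) from inv is less than 1/5 is less than 1/12. -/
open scoped BigOperators

/-- The property `inv`: pairs of functions that are equal or co-inverse. -/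
def InvPairs (n : ℕ) : Set ((Fin n → Fin n) × (Fin n → Fin n)) :=
  {p | (∀ i, p.1 i = p.2 i) ∨ (∀ i, p.2 (p.1 i) = i)}

/-- Distance of a pair `(f, g)` from the property `inv`:
`min over (f',g') ∈ inv of (d(f,f') + d(g,g'))/2`. -/
noncomputable def distToInv (n : ℕ) (f g : Fin n → Fin n) : ℝ :=
  sInf {r : ℝ | ∃ p ∈ InvPairs n, r = (nhdist f p.1 + nhdist g p.2) / 2}

/-!
If `(f, g)` is within distance `1/5` of `inv`, then `f, g` are within total Hamming distance
`2n/5` of a pair `(f', g')` that is equal or co-inverse. In the first case `f` and `g` agree on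
more than `3n/5` points, i.e. `g⁻¹ f` has more than `3n/5 > 36` fixed points; in the second
`g f` does. Since `(f, g) ↦ g⁻¹ f` and `(f, g) ↦ g f` push the uniform measure forward to the
uniform measure, and a uniform permutation has one fixed point on average (Burnside), Markov's
inequality bounds each event by `1/37`, and `2/37 < 1/12`.
-/

open Equiv MulAction Finset

theorem hammingDist_comp_equiv {ι ι' β : Type*} [Fintype ι] [Fintype ι'] [DecidableEq β]
    (e : ι' ≃ ι) (x y : ι → β) : hammingDist (x ∘ e) (y ∘ e) = hammingDist x y :=
  Finset.card_equiv e (by simp)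

theorem card_filter_mul_eq {G : Type*} [Group G] [Fintype G] (P : G → Prop) [DecidablePred P]
    (u : G → G) : #{x : G × G | P (u x.2 * x.1)} = #{g | P g} * Fintype.card G := by
  rw [card_filter, Fintype.sum_prod_type_right, mul_comm, ← Finset.card_univ]
  refine Finset.sum_const_nat fun b _ => ?_
  rw [card_filter]
  exact Equiv.sum_comp (Equiv.mulLeft (u b)) fun g => if P g then 1 else 0

namespace Equiv.Perm

variable {α : Type*} [Fintype α] [DecidableEq α]

theorem card_fixedBy_add_hammingDist_id (σ : Perm α) :
    Fintype.card (fixedBy α σ) + hammingDist ⇑σ id = Fintype.card α := by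
  simp only [hammingDist, Fintype.card_subtype, mem_fixedBy, Perm.smul_def, id, ne_eq]
  exact card_filter_add_card_filter_not _

theorem sum_card_fixedBy [Nonempty α] :
    ∑ σ : Perm α, Fintype.card (fixedBy α σ) = Fintype.card (Perm α) := by
  classical
  rw [sum_card_fixedBy_eq_card_orbits_mul_card_group,
    Fintype.card_eq_one_iff_nonempty_unique.mpr
      ((pretransitive_iff_unique_quotient_of_nonempty _ _).mp inferInstance),
    one_mul]

theorem card_filter_le_card_fixedBy_mul_le [Nonempty α] (k : ℕ) :
    #{σ : Perm α | k ≤ Fintype.card (fixedBy α σ)} * k ≤ Fintype.card (Perm α) :=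
  calc #{σ : Perm α | k ≤ Fintype.card (fixedBy α σ)} * k
      ≤ ∑ σ ∈ {σ : Perm α | k ≤ Fintype.card (fixedBy α σ)}, Fintype.card (fixedBy α σ) :=
        card_nsmul_le_sum _ _ _ fun _ hσ => (mem_filter.mp hσ).2
    _ ≤ ∑ σ : Perm α, Fintype.card (fixedBy α σ) := sum_le_sum_of_subset (filter_subset _ _)
    _ = Fintype.card (Perm α) := sum_card_fixedBy

theorem hammingDist_inv_mul_id (f g : Perm α) :
    hammingDist ⇑(g⁻¹ * f) id = hammingDist ⇑f ⇑g := by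
  rw [← hammingDist_comp (fun _ => ⇑g⁻¹) (x := ⇑f) (y := ⇑g) fun _ => g⁻¹.injective]
  congr 1 with i
  simp

theorem hammingDist_mul_id_le (f g : Perm α) {f' g' : α → α} (h : ∀ i, g' (f' i) = i) :
    hammingDist ⇑(g * f) id ≤ hammingDist ⇑f f' + hammingDist ⇑g g' := by
  have hid : g' ∘ f' = id := funext h
  calc hammingDist ⇑(g * f) id
        ≤ hammingDist (⇑g ∘ f) (g' ∘ f) + hammingDist (g' ∘ f) (g' ∘ f') :=
        hid ▸ hammingDist_triangle _ _ _
    _ ≤ hammingDist ⇑g g' + hammingDist ⇑f f' := by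
        rw [hammingDist_comp_equiv]
        exact Nat.add_le_add_left (hammingDist_comp_le_hammingDist fun _ => g') _
    _ = hammingDist ⇑f f' + hammingDist ⇑g g' := add_comm _ _

end Equiv.Perm

theorem exists_mem_invPairs_of_distToInv_lt {n : ℕ} (hn : 0 < n) {f g : Fin n → Fin n} {r : ℝ}
    (h : distToInv n f g < r) :
    ∃ p ∈ InvPairs n, (hammingDist f p.1 + hammingDist g p.2 : ℝ) < 2 * r * n := by
  have hne : {r : ℝ | ∃ p ∈ InvPairs n, r = (nhdist f p.1 + nhdist g p.2) / 2}.Nonempty :=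
    ⟨_, (id, id), Or.inl fun _ => rfl, rfl⟩
  obtain ⟨_, ⟨p, hp, rfl⟩, hlt⟩ := exists_lt_of_csInf_lt hne h
  refine ⟨p, hp, ?_⟩
  rw [nhdist, nhdist, ← add_div, div_div, div_lt_iff₀ (by positivity)] at hlt
  linarith

theorem hammingDist_id_le_of_mem_invPairs {n : ℕ} (f g : Perm (Fin n))
    {p : (Fin n → Fin n) × (Fin n → Fin n)} (hp : p ∈ InvPairs n) :
    hammingDist ⇑(g⁻¹ * f) id ≤ hammingDist ⇑f p.1 + hammingDist ⇑g p.2 ∨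
      hammingDist ⇑(g * f) id ≤ hammingDist ⇑f p.1 + hammingDist ⇑g p.2 := by
  rcases hp with heq | hinv
  · left
    rw [Perm.hammingDist_inv_mul_id, funext heq, hammingDist_comm ⇑g]
    exact hammingDist_triangle _ _ _
  · exact Or.inr (Perm.hammingDist_mul_id_le f g hinv)

theorem card_fixedBy_ge_of_distToInv_lt {n : ℕ} (hn : 60 < n) {f g : Perm (Fin n)}
    (h : distToInv n ⇑f ⇑g < 1 / 5) :
    37 ≤ Fintype.card (fixedBy (Fin n) (g⁻¹ * f)) ∨
      37 ≤ Fintype.card (fixedBy (Fin n) (g * f)) := by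
  obtain ⟨p, hp, hlt⟩ := exists_mem_invPairs_of_distToInv_lt (by omega) h
  have hlt' : 5 * (hammingDist ⇑f p.1 + hammingDist ⇑g p.2) < 2 * n := by
    exact_mod_cast (by linarith : (5 : ℝ) * (hammingDist ⇑f p.1 + hammingDist ⇑g p.2) < 2 * n)
  have h₁ := Perm.card_fixedBy_add_hammingDist_id (g⁻¹ * f)
  have h₂ := Perm.card_fixedBy_add_hammingDist_id (g * f)
  rw [Fintype.card_fin] at h₁ h₂
  rcases hammingDist_id_le_of_mem_invPairs f g hp with hle | hle <;> omega

open scoped Classical in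
/-- For `n > 60`, if `f` and `g` are independent uniformly random permutations of `[n]`,
then `Pr[d((f,g), inv) < 1/5] < 1/12`. -/
theorem random_perm_pair_far_from_inv (n : ℕ) (hn : 60 < n) :
    ((Finset.univ.filter (fun fg : Equiv.Perm (Fin n) × Equiv.Perm (Fin n) =>
        distToInv n (⇑fg.1) (⇑fg.2) < 1 / 5)).card : ℝ)
      / (Fintype.card (Equiv.Perm (Fin n) × Equiv.Perm (Fin n)) : ℝ) < 1 / 12 := by
  have : Nonempty (Fin n) := ⟨⟨0, by omega⟩⟩
  rw [Fintype.card_prod, div_lt_iff₀ (by positivity)]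
  set N := Fintype.card (Perm (Fin n))
  set D := #{σ : Perm (Fin n) | 37 ≤ Fintype.card (fixedBy (Fin n) σ)}
  set B := #{fg : Perm (Fin n) × Perm (Fin n) | distToInv n ⇑fg.1 ⇑fg.2 < 1 / 5}
  have hB : B ≤ 2 * (D * N) :=
    calc B ≤ #{fg : Perm (Fin n) × Perm (Fin n) |
            37 ≤ Fintype.card (fixedBy (Fin n) (fg.2⁻¹ * fg.1)) ∨
              37 ≤ Fintype.card (fixedBy (Fin n) (id fg.2 * fg.1))} :=
          card_le_card <| monotone_filter_right _ fun _ _ => card_fixedBy_ge_of_distToInv_lt hn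
      _ ≤ #{fg : Perm (Fin n) × Perm (Fin n) |
            37 ≤ Fintype.card (fixedBy (Fin n) (fg.2⁻¹ * fg.1))} +
          #{fg : Perm (Fin n) × Perm (Fin n) |
            37 ≤ Fintype.card (fixedBy (Fin n) (id fg.2 * fg.1))} := by
          rw [filter_or]
          exact card_union_le _ _
      _ = 2 * (D * N) := by
          rw [card_filter_mul_eq (fun σ => 37 ≤ Fintype.card (fixedBy (Fin n) σ)) (·⁻¹),
            card_filter_mul_eq (fun σ => 37 ≤ Fintype.card (fixedBy (Fin n) σ)) id]
          ring
  have hD : D * 37 ≤ N := Perm.card_filter_le_card_fixedBy_mul_le 37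
  have hN : 0 < N := Fintype.card_pos
  have h12 : (12 * B : ℝ) < N * N := by exact_mod_cast (by nlinarith : 12 * B < N * N)
  rw [Nat.cast_mul]
  linarith
end

section
/- For every n and all functions f, g : [n] → [n], d(g∘f, id) ≥ min_σ d(f, σ), where the minimum is over all permutations σ of [n], d is the normalized Hamming distance between functions, and id is the identity function. -/
/-- For all functions `f, g : [n] → [n]`, the distance of `g∘f` from the identity is at least
the distance of `f` from being a permutation: `d(g∘f, id) ≥ min_σ d(f, σ)`. -/
theorem dist_comp_id_ge_dist_perm (n : ℕ) (f g : Fin n → Fin n) :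
    ⨅ σ : Equiv.Perm (Fin n), nhdist f ⇑σ ≤ nhdist (fun i => g (f i)) id := by
  classical
  set s : Set (Fin n) := {i | g (f i) = i} with hs
  have hinj : Set.InjOn f s := by
    intro i hi j hj hij
    have : g (f i) = g (f j) := by rw [hij]
    rwa [hi, hj] at this
  have hcard : Fintype.card (Fin n) = (Finset.univ : Finset (Fin n)).card := by simp
  have hmaps : s.MapsTo f (Finset.univ : Finset (Fin n)) := fun i _ => Finset.mem_univ _
  obtain ⟨e, he⟩ := hmaps.exists_equiv_extend_of_card_eq hcard hinj
  set σ : Equiv.Perm (Fin n) := e.trans (Equiv.subtypeUnivEquiv fun x => Finset.mem_univ x)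
  have hσ : ∀ i ∈ s, σ i = f i := fun i hi => he i hi
  have hle : hammingDist f ⇑σ ≤ hammingDist (fun i => g (f i)) id := by
    apply Finset.card_le_card
    intro i hi
    simp only [Finset.mem_filter, Finset.mem_univ, true_and] at hi ⊢
    intro hgi
    exact hi ((hσ i hgi).symm)
  have hbb : BddBelow (Set.range fun σ : Equiv.Perm (Fin n) => nhdist f ⇑σ) := by
    refine ⟨0, ?_⟩
    rintro x ⟨τ, rfl⟩
    exact div_nonneg (Nat.cast_nonneg _) (Nat.cast_nonneg _)
  refine ciInf_le_of_le hbb σ ?_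
  unfold nhdist
  gcongr
end

section
/- Fix m ≥ 1 and let C : [m] → {0,1}^m be an injective map such that the normalized Hamming distance between C(a) and C(b) is at least 1/3 for all a ≠ b. For a function f : [m]×[m] → {0,1}, let U_f be the probability mass function on {0,1}^{2m} obtained by choosing a ∈ [m] uniformly at random and outputting the concatenation of C(a) with the string ⟨f(a,b)⟩_{b∈[m]}. Let Sym be the set of PMFs P on {0,1}^{2m} such that Pr_{x∼P}[∃a ∈ [m] : (x_1,…,x_m) = C(a)] = 1 and, for all a, b ∈ [m], Pr_{x,y∼P}[(x_1,…,x_m) = C(a) ∧ (y_1,…,y_m) = C(b) ∧ x_{m+b} ≠ y_{m+a}] = 0. Let sym be the set of symmetric functions g : [m]×[m] → {0,1} (those with g(a,b) = g(b,a) for all a,b), and let d(f, sym) = min_{g∈sym} |{(a,b) : f(a,b) ≠ g(a,b)}|/m². Then d_EMD(U_f, Sym) ≥ (1/6)·d(f, sym), where the EMD is with respect to the normalized Hamming distance on {0,1}^{2m}. -/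
open scoped BigOperators

/-- The distribution `U_f` for `f : [m]×[m] → {0,1}`: choose `a ∈ [m]` uniformly and output
the concatenation of the codeword `C a` with the row `⟨f(a,b)⟩_{b∈[m]}`. -/
noncomputable def Uf (m : ℕ) [NeZero m] (C : Fin m → Fin m → Bool)
    (f : Fin m → Fin m → Bool) : PMF (Fin (m + m) → Bool) :=
  (PMF.uniformOfFintype (Fin m)).map (fun a => Fin.append (C a) (f a))

/-- The property `Sym`: every element of the support starts with a valid codeword `C a`,
and any two supported elements with keys `a`, `b` satisfy the symmetry condition
`x_{m+b} = y_{m+a}` (i.e. the violation event has probability 0). -/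
def SymSet (m : ℕ) (C : Fin m → Fin m → Bool) : Set (PMF (Fin (m + m) → Bool)) :=
  {P | (∀ x ∈ P.support, ∃ a : Fin m, ∀ i : Fin m, x (Fin.castAdd m i) = C a i) ∧
    ∀ a b : Fin m, ∀ x ∈ P.support, ∀ y ∈ P.support,
      (∀ i : Fin m, x (Fin.castAdd m i) = C a i) →
      (∀ i : Fin m, y (Fin.castAdd m i) = C b i) →
      x (Fin.natAdd m b) = y (Fin.natAdd m a)}

/-- Distance of `f : [m]×[m] → {0,1}` from the set of symmetric functions,
as fraction of the `m²` entries that must change. -/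
noncomputable def distToSym (m : ℕ) (f : Fin m → Fin m → Bool) : ℝ :=
  sInf {r : ℝ | ∃ g : Fin m → Fin m → Bool, (∀ a b, g a b = g b a) ∧
    r = ((Finset.univ.filter (fun p : Fin m × Fin m => f p.1 p.2 ≠ g p.1 p.2)).card : ℝ)
        / (m ^ 2 : ℝ)}

/- ### Auxiliary lemmas -/

lemma sum_map_toReal {β γ : Type*} [Fintype β] [DecidableEq γ] [Fintype γ]
    (T : PMF β) (k : β → γ) (u : γ → ℝ) :
    ∑ c : γ, ((T.map k) c).toReal * u c = ∑ b : β, (T b).toReal * u (k b) := by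
  have h : ∀ c : γ, ((T.map k) c).toReal
      = ∑ b : β, if c = k b then (T b).toReal else 0 := by
    intro c
    rw [PMF.map_apply, tsum_fintype, ENNReal.toReal_sum]
    · refine Finset.sum_congr rfl fun b _ => ?_
      by_cases hcb : c = k b
      · simp [hcb]
      · simp [hcb]
    · intro b _
      split
      · exact PMF.apply_ne_top T b
      · simp
  calc ∑ c : γ, ((T.map k) c).toReal * u c
      = ∑ c : γ, ∑ b : β, (if c = k b then (T b).toReal else 0) * u c := by
        refine Finset.sum_congr rfl fun c _ => ?_
        rw [h, Finset.sum_mul]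
    _ = ∑ b : β, ∑ c : γ, if c = k b then (T b).toReal * u c else 0 := by
        rw [Finset.sum_comm]
        refine Finset.sum_congr rfl fun b _ => Finset.sum_congr rfl fun c _ => ?_
        rw [ite_mul, zero_mul]
    _ = ∑ b : β, (T b).toReal * u (k b) := by
        refine Finset.sum_congr rfl fun b _ => ?_
        rw [Finset.sum_ite_eq' Finset.univ (k b) (fun c => (T b).toReal * u c)]
        simp

lemma exists_coupling {α : Type*} (P Q : PMF α) : ∃ T : PMF (α × α), IsCoupling T P Q := by
  refine ⟨P.bind fun x => Q.map fun y => (x, y), ?_, ?_⟩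
  · rw [PMF.map_bind]
    simp only [PMF.map_comp, Function.comp_def]
    have : ∀ x : α, (PMF.map (fun _ : α => x) Q) = PMF.pure x := fun x => PMF.map_const Q x
    simp only [this, PMF.bind_pure]
  · rw [PMF.map_bind]
    simp only [PMF.map_comp, Function.comp_def]
    have : (PMF.map (fun y : α => y) Q) = Q := PMF.map_id Q
    simp only [this, PMF.bind_const]

lemma hamming_append_split {m : ℕ} (u v : Fin m → Bool) (y : Fin (m + m) → Bool) :
    hammingDist (Fin.append u v) y =
      hammingDist u (fun i => y (Fin.castAdd m i)) +
        hammingDist v (fun i => y (Fin.natAdd m i)) := by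
  unfold hammingDist
  rw [Finset.card_filter, Finset.card_filter, Finset.card_filter, Fin.sum_univ_add]
  simp only [Fin.append_left, Fin.append_right]

/-- For an injective code `C` with pairwise normalized distance at least `1/3`,
`d_EMD(U_f, Sym) ≥ (1/6)·d(f, sym)`. -/
theorem uf_dist_from_Sym (m : ℕ) [NeZero m] (C : Fin m → Fin m → Bool)
    (hinj : Function.Injective C)
    (hdist : ∀ a b : Fin m, a ≠ b → 1 / 3 ≤ nhdist (C a) (C b))
    (f : Fin m → Fin m → Bool) :
    (1 / 6) * distToSym m f
      ≤ sInf ((fun Q => emd nhdist (Uf m C f) Q) '' SymSet m C) := by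
  classical
  have hmpos : 0 < m := Nat.pos_of_ne_zero (NeZero.ne m)
  have hm : (0 : ℝ) < m := by exact_mod_cast hmpos
  have hm0 : (m : ℝ) ≠ 0 := ne_of_gt hm
  set emb : Fin m → (Fin (m + m) → Bool) := fun a => Fin.append (C a) (f a) with hemb
  have hembinj : Function.Injective emb := by
    intro a b h
    apply hinj
    funext i
    have := congrFun h (Fin.castAdd m i)
    simpa [emb, Fin.append_left] using this
  apply le_csInf
  · -- the image is nonempty: a point mass belongs to SymSet
    have a0 : Fin m := ⟨0, hmpos⟩
    refine Set.Nonempty.image _ ⟨PMF.pure (emb a0), ?_, ?_⟩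
    · intro x hx
      rw [PMF.support_pure] at hx
      subst hx
      exact ⟨a0, fun i => by simp [emb, Fin.append_left]⟩
    · intro a b x hx y hy hxa hyb
      rw [PMF.support_pure] at hx hy
      subst hx; subst hy
      have ha : a = a0 := by
        apply hinj; funext i
        have := hxa i; simpa [emb, Fin.append_left] using this.symm
      have hb : b = a0 := by
        apply hinj; funext i
        have := hyb i; simpa [emb, Fin.append_left] using this.symm
      subst ha; subst hb; rfl
  · rintro r ⟨Q, hQ, rfl⟩
    obtain ⟨hQ1, hQ2⟩ := hQ
    -- construct the symmetric function g
    obtain ⟨g, hgsymm, hgrow⟩ : ∃ g : Fin m → Fin m → Bool, (∀ a b, g a b = g b a) ∧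
        ∀ a : Fin m, ∀ y ∈ Q.support, (∀ i, y (Fin.castAdd m i) = C a i) →
          ∀ b : Fin m, f a b ≠ g a b → y (Fin.natAdd m b) = g a b := by
      set pres : Fin m → Prop :=
        fun a => ∃ y ∈ Q.support, ∀ i, y (Fin.castAdd m i) = C a i with hpres
      set w : Fin m → (Fin (m + m) → Bool) :=
        fun a => if h : pres a then h.choose else (fun _ => false) with hwdef
      have hwmem : ∀ a, pres a → w a ∈ Q.support ∧ ∀ i, w a (Fin.castAdd m i) = C a i := by
        intro a h
        simp only [hwdef, dif_pos h]
        exact ⟨h.choose_spec.1, h.choose_spec.2⟩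
      have hrr : ∀ a b : Fin m, pres a → pres b →
          w a (Fin.natAdd m b) = w b (Fin.natAdd m a) := by
        intro a b ha hb
        exact hQ2 a b (w a) (hwmem a ha).1 (w b) (hwmem b hb).1 (hwmem a ha).2 (hwmem b hb).2
      refine ⟨fun a b =>
        if pres a then (if pres b then w a (Fin.natAdd m b) else f a b)
        else (if pres b then f b a else (f a b && f b a)), ?_, ?_⟩
      · intro a b
        by_cases ha : pres a <;> by_cases hb : pres b <;>
          simp only [ha, hb, if_true, if_false, Bool.and_comm]
        exact hrr a b ha hb
      · intro a y hy hpref b hne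
        have ha : pres a := ⟨y, hy, hpref⟩
        by_cases hb : pres b
        · simp only [ha, hb, if_true] at hne ⊢
          have h1 : y (Fin.natAdd m b) = w b (Fin.natAdd m a) :=
            hQ2 a b y hy (w b) (hwmem b hb).1 hpref (hwmem b hb).2
          rw [h1, ← hrr a b ha hb]
        · simp only [ha, hb, if_true, if_false] at hne
          exact absurd rfl hne
    -- disagreement counts
    set Δ : Fin m → ℕ :=
      fun a => (Finset.univ.filter fun b => f a b ≠ g a b).card with hΔdef
    set D : ℕ :=
      (Finset.univ.filter fun p : Fin m × Fin m => f p.1 p.2 ≠ g p.1 p.2).card with hDdef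
    have hΔle : ∀ a, (Δ a : ℝ) ≤ m := by
      intro a
      have : Δ a ≤ m := le_trans (Finset.card_filter_le _ _) (by simp)
      exact_mod_cast this
    have hsumΔ : ∑ a, Δ a = D := by
      simp only [hΔdef, hDdef, Finset.card_filter]
      rw [Fintype.sum_prod_type]
    have hDle : distToSym m f ≤ (D : ℝ) / (m ^ 2 : ℝ) := by
      apply csInf_le
      · refine ⟨0, ?_⟩
        rintro r ⟨g', _, rfl⟩
        positivity
      · exact ⟨g, hgsymm, rfl⟩
    -- key pointwise bound
    have key : ∀ a : Fin m, ∀ y ∈ Q.support, (Δ a : ℝ) / (6 * m) ≤ nhdist (emb a) y := by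
      intro a y hy
      obtain ⟨a', ha'⟩ := hQ1 y hy
      have hsplit := hamming_append_split (C a) (f a) y
      set H1 : ℕ := hammingDist (C a) (fun i => y (Fin.castAdd m i)) with hH1
      set H2 : ℕ := hammingDist (f a) (fun i => y (Fin.natAdd m i)) with hH2
      have hnh : nhdist (emb a) y = ((H1 : ℝ) + H2) / ((m : ℝ) + m) := by
        unfold nhdist
        rw [hemb, hsplit]
        push_cast
        ring_nf
      rw [hnh, div_le_div_iff₀ (by positivity) (by positivity)]
      have hH2nn : (0 : ℝ) ≤ H2 := by positivity
      have hH1nn : (0 : ℝ) ≤ H1 := by positivity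
      by_cases hcase : a' = a
      · have ha'' : ∀ i, y (Fin.castAdd m i) = C a i := by
          intro i; rw [← hcase]; exact ha' i
        have hsub : (Δ a : ℝ) ≤ H2 := by
          have : Δ a ≤ H2 := by
            apply Finset.card_le_card
            intro b hb
            simp only [Finset.mem_filter, Finset.mem_univ, true_and] at hb ⊢
            rw [hgrow a y hy ha'' b hb]
            exact hb
          exact_mod_cast this
        nlinarith
      · have hne : a ≠ a' := fun h => hcase h.symm
        have hfun : (fun i => y (Fin.castAdd m i)) = C a' := funext ha'
        have h13 : (1 : ℝ) / 3 ≤ (H1 : ℝ) / m := by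
          have := hdist a a' hne
          unfold nhdist at this
          rwa [← hfun] at this
        have hmH1 : (m : ℝ) ≤ 3 * H1 := by
          rw [div_le_div_iff₀ (by norm_num) hm] at h13
          linarith
        have := hΔle a
        nlinarith
    -- the function φ
    set φ : (Fin (m + m) → Bool) → ℝ :=
      fun x => if h : ∃ a, x = emb a then (Δ h.choose : ℝ) / (6 * m) else 0 with hφdef
    have hφemb : ∀ a, φ (emb a) = (Δ a : ℝ) / (6 * m) := by
      intro a
      have h : ∃ a', emb a = emb a' := ⟨a, rfl⟩
      simp only [hφdef, dif_pos h]
      rw [← hembinj h.choose_spec]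
    apply le_csInf
    · obtain ⟨T, hT⟩ := exists_coupling (Uf m C f) Q
      exact ⟨expCost nhdist T, T, hT, rfl⟩
    · rintro r ⟨T, ⟨hT1, hT2⟩, rfl⟩
      calc (1 / 6) * distToSym m f
          ≤ (1 / 6) * ((D : ℝ) / (m ^ 2 : ℝ)) := by
            apply mul_le_mul_of_nonneg_left hDle (by norm_num)
        _ = ∑ a : Fin m, ((m : ℝ))⁻¹ * ((Δ a : ℝ) / (6 * m)) := by
            rw [← hsumΔ, Nat.cast_sum, Finset.sum_div, Finset.mul_sum]
            refine Finset.sum_congr rfl fun a _ => ?_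
            simp only [div_eq_mul_inv, mul_inv, pow_two]
            ring
        _ = ∑ x, ((Uf m C f) x).toReal * φ x := by
            rw [show Uf m C f = (PMF.uniformOfFintype (Fin m)).map emb from rfl,
              sum_map_toReal]
            refine Finset.sum_congr rfl fun a _ => ?_
            rw [hφemb, PMF.uniformOfFintype_apply]
            congr 1
            simp [ENNReal.toReal_inv]
        _ = ∑ z : _ × _, (T z).toReal * φ z.1 := by
            rw [← hT1, sum_map_toReal]
        _ ≤ expCost nhdist T := by
            unfold expCost
            refine Finset.sum_le_sum fun z _ => ?_
            by_cases hz : T z = 0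
            · simp [hz]
            · have hz1 : z.1 ∈ (Uf m C f).support := by
                rw [← hT1, PMF.support_map]
                exact ⟨z, hz, rfl⟩
              have hz2 : z.2 ∈ Q.support := by
                rw [← hT2, PMF.support_map]
                exact ⟨z, hz, rfl⟩
              obtain ⟨a, -, ha⟩ : ∃ a, a ∈ (PMF.uniformOfFintype (Fin m)).support ∧
                  emb a = z.1 := by
                rw [show Uf m C f = (PMF.uniformOfFintype (Fin m)).map emb from rfl,
                  PMF.support_map] at hz1
                exact hz1
              have hle : φ z.1 ≤ nhdist z.1 z.2 := by
                rw [← ha, hφemb]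
                exact key a z.2 hz2
              exact mul_le_mul_of_nonneg_left hle ENNReal.toReal_nonneg
end

section
/- For all integers k ≥ 2 and m and every real a ≥ 1, if m > a·k² then m^{k−1} < e^{1/a} · (m−1)!/(m−k)!. -/
private lemma weier_aux (f : ℕ → ℝ) : ∀ n : ℕ, (∀ i ∈ Finset.range n, 0 ≤ f i) →
    (∀ i ∈ Finset.range n, f i ≤ 1) →
    1 - ∑ i ∈ Finset.range n, f i ≤ ∏ i ∈ Finset.range n, (1 - f i) := by
  intro n
  induction n with
  | zero => simp
  | succ n ih =>
    intro h0 h1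
    have h0' : ∀ i ∈ Finset.range n, 0 ≤ f i := fun i hi =>
      h0 i (Finset.mem_range.mpr (Nat.lt_succ_of_lt (Finset.mem_range.mp hi)))
    have h1' : ∀ i ∈ Finset.range n, f i ≤ 1 := fun i hi =>
      h1 i (Finset.mem_range.mpr (Nat.lt_succ_of_lt (Finset.mem_range.mp hi)))
    have ihn := ih h0' h1'
    have hfn0 : 0 ≤ f n := h0 n (Finset.mem_range.mpr (Nat.lt_succ_self n))
    have hfn1 : f n ≤ 1 := h1 n (Finset.mem_range.mpr (Nat.lt_succ_self n))
    have hS : 0 ≤ ∑ i ∈ Finset.range n, f i := Finset.sum_nonneg h0'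
    rw [Finset.sum_range_succ, Finset.prod_range_succ]
    nlinarith [ihn, hfn0, hfn1, hS]

private lemma gauss_aux : ∀ n : ℕ, (∑ i ∈ Finset.range n, ((i : ℝ) + 1)) * 2 = n * (n + 1) := by
  intro n
  induction n with
  | zero => simp
  | succ n ih =>
    rw [Finset.sum_range_succ]
    push_cast
    push_cast at ih
    linarith

/-- For integers `k ≥ 2` and `m` and real `a ≥ 1`, if `m > a·k²` then
`m^{k−1} < e^{1/a}·(m−1)!/(m−k)!`. -/
theorem pow_lt_exp_mul_descFactorial (k m : ℕ) (hk : 2 ≤ k) (a : ℝ) (ha : 1 ≤ a)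
    (hm : a * (k : ℝ) ^ 2 < m) :
    (m : ℝ) ^ (k - 1) < Real.exp (1 / a)
      * ((Nat.factorial (m - 1) : ℝ) / (Nat.factorial (m - k) : ℝ)) := by
  have ha0 : 0 < a := lt_of_lt_of_le one_pos ha
  set K := k - 1 with hKdef
  have hk1 : k = K + 1 := by omega
  have hkr : (k : ℝ) ^ 2 ≤ a * (k : ℝ) ^ 2 := le_mul_of_one_le_left (by positivity) ha
  have hmk : (k : ℝ) ^ 2 < m := lt_of_le_of_lt hkr hm
  have hmkn : k ^ 2 < m := by exact_mod_cast hmk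
  have hkm : k ≤ m := by nlinarith [hk, hmkn]
  have hm0 : (0 : ℝ) < m := by
    have : 0 < m := by omega
    exact_mod_cast this
  -- rewrite the factorial quotient as a descending factorial
  have hKle : K ≤ m - 1 := by omega
  have hfd := Nat.factorial_mul_descFactorial hKle
  have hmk1 : m - 1 - K = m - k := by omega
  rw [hmk1] at hfd
  have hfac0 : (0 : ℝ) < (Nat.factorial (m - k) : ℝ) := by
    exact_mod_cast Nat.factorial_pos (m - k)
  have hdf : ((Nat.factorial (m - 1) : ℝ) / (Nat.factorial (m - k) : ℝ))
      = ((m - 1).descFactorial K : ℝ) := by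
    rw [div_eq_iff (ne_of_gt hfac0), ← hfd]
    push_cast
    ring
  rw [hdf, Nat.descFactorial_eq_prod_range]
  -- cast the product to ℝ
  have hcast : (((∏ i ∈ Finset.range K, (m - 1 - i)) : ℕ) : ℝ)
      = ∏ i ∈ Finset.range K, ((m : ℝ) - ((i : ℝ) + 1)) := by
    rw [Nat.cast_prod]
    refine Finset.prod_congr rfl fun i hi => ?_
    have hi' : i + 1 ≤ m := by
      have := Finset.mem_range.mp hi; omega
    rw [show m - 1 - i = m - (i + 1) by omega, Nat.cast_sub hi']
    push_cast
    ring
  rw [hcast]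
  -- factor out m^K
  have hfac : ∏ i ∈ Finset.range K, ((m : ℝ) - ((i : ℝ) + 1))
      = (m : ℝ) ^ K * ∏ i ∈ Finset.range K, (1 - ((i : ℝ) + 1) / m) := by
    have h1 : ∀ i ∈ Finset.range K, ((m : ℝ) - ((i : ℝ) + 1)) = (m : ℝ) * (1 - ((i : ℝ) + 1) / m) := by
      intro i hi; field_simp
    rw [Finset.prod_congr rfl h1, Finset.prod_mul_distrib, Finset.prod_const, Finset.card_range]
  rw [hfac]
  -- Weierstrass bound
  set P := ∏ i ∈ Finset.range K, (1 - ((i : ℝ) + 1) / m) with hP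
  have hw : 1 - ∑ i ∈ Finset.range K, ((i : ℝ) + 1) / m ≤ P := by
    apply weier_aux
    · intro i hi; positivity
    · intro i hi
      have hi' : i + 1 ≤ m := by have := Finset.mem_range.mp hi; omega
      rw [div_le_one hm0]
      exact_mod_cast hi'
  -- sum bound
  have hsum : (∑ i ∈ Finset.range K, ((i : ℝ) + 1) / m)
      = (∑ i ∈ Finset.range K, ((i : ℝ) + 1)) / m := by
    rw [Finset.sum_div]
  set b := 1 / a with hb
  have hb0 : 0 < b := by positivity
  have hb1 : b ≤ 1 := by rw [hb]; rw [div_le_one ha0]; exact ha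
  have hab : a * b = 1 := by rw [hb]; field_simp
  have hS2 : (∑ i ∈ Finset.range K, ((i : ℝ) + 1)) * 2 = K * (K + 1) := gauss_aux K
  have hKk : ((K : ℝ) + 1) = k := by rw [hk1]; push_cast; ring
  have hsmall : (∑ i ∈ Finset.range K, ((i : ℝ) + 1)) / m < b / 2 := by
    rw [div_lt_div_iff₀ hm0 (by norm_num : (0:ℝ) < 2)]
    -- ∑ * 2 = K(K+1) = K*k ≤ k² and k² < b*m
    have hkb : (k : ℝ) ^ 2 < b * m := by
      have := mul_lt_mul_of_pos_left hm hb0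
      calc (k : ℝ) ^ 2 = b * (a * (k : ℝ) ^ 2) := by rw [← mul_assoc, mul_comm b a, hab, one_mul]
        _ < b * m := this
    have hKk2 : (K : ℝ) * ((K : ℝ) + 1) ≤ (k : ℝ) ^ 2 := by
      rw [hKk]
      have : (K : ℝ) ≤ k := by rw [← hKk]; linarith
      nlinarith [Nat.cast_nonneg (α := ℝ) k]
    calc (∑ i ∈ Finset.range K, ((i : ℝ) + 1)) * 2 = K * (K + 1) := hS2
      _ ≤ (k : ℝ) ^ 2 := hKk2
      _ < b * m := hkb
  have hPlb : 1 - b / 2 < P := by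
    have := hw
    rw [hsum] at this
    linarith
  -- exponential bound
  have hexp : 1 + b < Real.exp b := by
    have := Real.add_one_lt_exp (ne_of_gt hb0)
    linarith
  have hEP : 1 < Real.exp b * P := by
    have hE0 : (0:ℝ) < 1 + b := by linarith
    have hP0 : (0:ℝ) < 1 - b / 2 := by linarith
    have key : 1 ≤ (1 + b) * (1 - b / 2) := by nlinarith [hb0, hb1]
    have hlt : (1 + b) * (1 - b / 2) < Real.exp b * P :=
      mul_lt_mul'' hexp hPlb (le_of_lt hE0) (le_of_lt hP0)
    linarith
  have hmK : (0 : ℝ) < (m : ℝ) ^ K := by positivity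
  calc (m : ℝ) ^ K = 1 * (m : ℝ) ^ K := (one_mul _).symm
    _ < (Real.exp b * P) * (m : ℝ) ^ K := by
        exact mul_lt_mul_of_pos_right hEP hmK
    _ = Real.exp b * ((m : ℝ) ^ K * P) := by ring
end
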